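/- arXiv:2407.18150 — 2 statements merged into one kernel-verified Lean document; each statement's English description precedes it below -/
import Mathlib

section
/- If s ∈ ℝ^q satisfies m(s) ≤ m(ŝ), then q(0) − q(s) ≥ (1 − β) α̂ ‖g‖² + (σ/6)‖s‖³. -/
open scoped RealInnerProductSpace

noncomputable section

/-- `U_I`: extension by zero from block coordinates to full coordinates. -/
def blockIncl {n : ℕ} (I : Finset (Fin n)) :
    EuclideanSpace ℝ ↥I →ₗ[ℝ] EuclideanSpace ℝ (Fin n) where
  toFun s := WithLp.toLp 2 (fun i => if h : i ∈ I then s ⟨i, h⟩ else 0)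
  map_add' s t := by ext i; by_cases h : i ∈ I <;> simp [h]
  map_smul' c s := by ext i; by_cases h : i ∈ I <;> simp [h]

/-- `U_Iᵀ`: restriction of a vector to the block coordinates. -/
def blockRestr {n : ℕ} (I : Finset (Fin n)) :
    EuclideanSpace ℝ (Fin n) →ₗ[ℝ] EuclideanSpace ℝ ↥I where
  toFun x := WithLp.toLp 2 (fun i => x i)
  map_add' x y := by ext i; simp
  map_smul' c x := by ext i; simp

/-- Block Hessian `U_Iᵀ H U_I` as a continuous linear map. -/
def blockHess {n : ℕ} (I : Finset (Fin n))
    (H : EuclideanSpace ℝ (Fin n) →L[ℝ] EuclideanSpace ℝ (Fin n)) :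
    EuclideanSpace ℝ ↥I →L[ℝ] EuclideanSpace ℝ ↥I :=
  LinearMap.toContinuousLinearMap
    ((blockRestr I) ∘ₗ ((H : EuclideanSpace ℝ (Fin n) →ₗ[ℝ] EuclideanSpace ℝ (Fin n)) ∘ₗ blockIncl I))

/-- Quadratic model `q(s) = f₀ + gᵀs + (1/2) sᵀ H s`. -/
def quadModel {E : Type*} [NormedAddCommGroup E] [InnerProductSpace ℝ E]
    (f₀ : ℝ) (g : E) (H : E →L[ℝ] E) (s : E) : ℝ :=
  f₀ + ⟪g, s⟫ + (1 / 2) * ⟪s, H s⟫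

/-- Cubic model `m(s) = q(s) + (σ/6) ‖s‖³`. -/
def cubicModel {E : Type*} [NormedAddCommGroup E] [InnerProductSpace ℝ E]
    (f₀ : ℝ) (g : E) (H : E →L[ℝ] E) (σ : ℝ) (s : E) : ℝ :=
  quadModel f₀ g H s + σ / 6 * ‖s‖ ^ 3

/-- Gradient of the cubic model: `∇m(s) = g + H s + (σ/2) ‖s‖ s`. -/
def cubicModelGrad {E : Type*} [NormedAddCommGroup E] [InnerProductSpace ℝ E]
    (g : E) (H : E →L[ℝ] E) (σ : ℝ) (s : E) : E :=
  g + H s + (σ / 2 * ‖s‖) • s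

/-- The stepsize `α̂ = min{β/‖H‖, √(3β/(σ‖g‖))}`, the first argument being `+∞` if `H = 0`. -/
def alphaHat {E : Type*} [NormedAddCommGroup E] [InnerProductSpace ℝ E]
    (β σ : ℝ) (g : E) (H : E →L[ℝ] E) : ℝ :=
  haveI := Classical.dec (H = 0)
  if H = 0 then Real.sqrt (3 * β / (σ * ‖g‖))
  else min (β / ‖H‖) (Real.sqrt (3 * β / (σ * ‖g‖)))

/-- The Cauchy-like point `ŝ = -α̂ g`. -/
def sHat {E : Type*} [NormedAddCommGroup E] [InnerProductSpace ℝ E]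
    (β σ : ℝ) (g : E) (H : E →L[ℝ] E) : E :=
  -(alphaHat β σ g H) • g

/-!
Along the steepest-descent ray, `m(-α g) = f₀ - α‖g‖² + (α²/2) gᵀHg + (σ/6) α³‖g‖³`.
The two caps on `α̂` are chosen so that each of the last two terms is at most `(β/2) α̂ ‖g‖²`:
`α̂ ‖H‖ ≤ β` controls the curvature term and `α̂² σ ‖g‖ ≤ 3β` the cubic one.
Hence `m(ŝ) ≤ q(0) - (1 - β) α̂ ‖g‖²`, and any `s` with `m(s) ≤ m(ŝ)` inherits this bound
after moving the cubic term of `m(s)` to the left.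
-/

section Models

variable {E : Type*} [NormedAddCommGroup E] [InnerProductSpace ℝ E]

theorem quadModel_zero (f₀ : ℝ) (g : E) (H : E →L[ℝ] E) : quadModel f₀ g H 0 = f₀ := by
  simp [quadModel]

theorem inner_apply_self_le_opNorm_mul_sq (H : E →L[ℝ] E) (x : E) :
    ⟪x, H x⟫ ≤ ‖H‖ * ‖x‖ ^ 2 :=
  calc ⟪x, H x⟫ ≤ ‖x‖ * ‖H x‖ := real_inner_le_norm x (H x)
    _ ≤ ‖x‖ * (‖H‖ * ‖x‖) := by gcongr; exact H.le_opNorm x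
    _ = ‖H‖ * ‖x‖ ^ 2 := by ring

theorem cubicModel_neg_smul (f₀ : ℝ) (g : E) (H : E →L[ℝ] E) (σ : ℝ) {α : ℝ} (hα : 0 ≤ α) :
    cubicModel f₀ g H σ (-α • g) =
      f₀ - α * ‖g‖ ^ 2 + α ^ 2 / 2 * ⟪g, H g⟫ + σ / 6 * α ^ 3 * ‖g‖ ^ 3 := by
  simp only [cubicModel, quadModel, neg_smul, map_neg, map_smul, inner_neg_left, inner_neg_right,
    real_inner_smul_left, real_inner_smul_right, real_inner_self_eq_norm_sq, norm_neg, norm_smul,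
    Real.norm_of_nonneg hα]
  ring

theorem cubicModel_neg_smul_le (f₀ : ℝ) (g : E) (H : E →L[ℝ] E) {σ α β : ℝ} (hα : 0 ≤ α)
    (hαH : α * ‖H‖ ≤ β) (hασ : α ^ 2 * (σ * ‖g‖) ≤ 3 * β) :
    cubicModel f₀ g H σ (-α • g) ≤ f₀ - (1 - β) * α * ‖g‖ ^ 2 := by
  have hcurv : α ^ 2 / 2 * ⟪g, H g⟫ ≤ β / 2 * α * ‖g‖ ^ 2 :=
    calc α ^ 2 / 2 * ⟪g, H g⟫ ≤ α ^ 2 / 2 * (‖H‖ * ‖g‖ ^ 2) := by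
          gcongr; exact inner_apply_self_le_opNorm_mul_sq H g
      _ = (α * ‖H‖) * (α * ‖g‖ ^ 2) / 2 := by ring
      _ ≤ β * (α * ‖g‖ ^ 2) / 2 := by gcongr
      _ = β / 2 * α * ‖g‖ ^ 2 := by ring
  have hcubic : σ / 6 * α ^ 3 * ‖g‖ ^ 3 ≤ β / 2 * α * ‖g‖ ^ 2 :=
    calc σ / 6 * α ^ 3 * ‖g‖ ^ 3 = (α ^ 2 * (σ * ‖g‖)) * (α * ‖g‖ ^ 2) / 6 := by ring
      _ ≤ 3 * β * (α * ‖g‖ ^ 2) / 6 := by gcongr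
      _ = β / 2 * α * ‖g‖ ^ 2 := by ring
  rw [cubicModel_neg_smul f₀ g H σ hα]
  linarith

end Models

theorem sq_mul_le_of_le_sqrt_div {a c x : ℝ} (ha : 0 ≤ a) (hc : 0 ≤ c) (h : a ≤ √(c / x)) :
    a ^ 2 * x ≤ c := by
  rcases le_or_gt x 0 with hx | hx
  · exact (mul_nonpos_of_nonneg_of_nonpos (sq_nonneg a) hx).trans hc
  · have hsq : a ^ 2 ≤ c / x := by
      simpa [Real.sq_sqrt (div_nonneg hc hx.le)] using pow_le_pow_left₀ ha h 2
    exact (le_div_iff₀ hx).1 hsq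

section AlphaHat

variable {E : Type*} [NormedAddCommGroup E] [InnerProductSpace ℝ E]
  {β : ℝ} (σ : ℝ) (g : E) (H : E →L[ℝ] E)

theorem alphaHat_nonneg (hβ : 0 ≤ β) : 0 ≤ alphaHat β σ g H := by
  unfold alphaHat
  split_ifs
  · exact Real.sqrt_nonneg _
  · exact le_min (div_nonneg hβ (norm_nonneg H)) (Real.sqrt_nonneg _)

theorem alphaHat_le_sqrt : alphaHat β σ g H ≤ √(3 * β / (σ * ‖g‖)) := by
  unfold alphaHat
  split_ifs
  · exact le_rfl
  · exact min_le_right _ _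

theorem alphaHat_mul_opNorm_le (hβ : 0 ≤ β) : alphaHat β σ g H * ‖H‖ ≤ β := by
  by_cases hH : H = 0
  · simpa [hH] using hβ
  · have hle : alphaHat β σ g H ≤ β / ‖H‖ := by
      rw [alphaHat, if_neg hH]
      exact min_le_left _ _
    exact (le_div_iff₀ (norm_pos_iff.2 hH)).1 hle

theorem alphaHat_sq_mul_le (hβ : 0 ≤ β) : alphaHat β σ g H ^ 2 * (σ * ‖g‖) ≤ 3 * β :=
  sq_mul_le_of_le_sqrt_div (alphaHat_nonneg σ g H hβ) (by positivity) (alphaHat_le_sqrt σ g H)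

theorem cubicModel_sHat_le (f₀ : ℝ) (hβ : 0 ≤ β) :
    cubicModel f₀ g H σ (sHat β σ g H) ≤ f₀ - (1 - β) * alphaHat β σ g H * ‖g‖ ^ 2 :=
  cubicModel_neg_smul_le f₀ g H (alphaHat_nonneg σ g H hβ) (alphaHat_mul_opNorm_le σ g H hβ)
    (alphaHat_sq_mul_le σ g H hβ)

end AlphaHat

theorem stmt6_general (q : ℕ) (g : EuclideanSpace ℝ (Fin q))
    (H : EuclideanSpace ℝ (Fin q) →L[ℝ] EuclideanSpace ℝ (Fin q))
    (f₀ σ β : ℝ) (hβ0 : 0 < β)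
    (s : EuclideanSpace ℝ (Fin q))
    (hs : cubicModel f₀ g H σ s ≤ cubicModel f₀ g H σ (sHat β σ g H)) :
    (1 - β) * alphaHat β σ g H * ‖g‖ ^ 2 + σ / 6 * ‖s‖ ^ 3 ≤
      quadModel f₀ g H 0 - quadModel f₀ g H s := by
  have hŝ := cubicModel_sHat_le σ g H f₀ hβ0.le
  rw [cubicModel] at hs
  rw [quadModel_zero]
  linarith

theorem stmt6 (q : ℕ) (g : EuclideanSpace ℝ (Fin q)) (hg : g ≠ 0)
    (H : EuclideanSpace ℝ (Fin q) →L[ℝ] EuclideanSpace ℝ (Fin q))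
    (hH : ∀ u v, ⟪H u, v⟫ = ⟪u, H v⟫)
    (f₀ σ β : ℝ) (hσ : 0 < σ) (hβ0 : 0 < β) (hβ1 : β < 1)
    (s : EuclideanSpace ℝ (Fin q))
    (hs : cubicModel f₀ g H σ s ≤ cubicModel f₀ g H σ (sHat β σ g H)) :
    (1 - β) * alphaHat β σ g H * ‖g‖ ^ 2 + σ / 6 * ‖s‖ ^ 3 ≤
      quadModel f₀ g H 0 - quadModel f₀ g H s :=
  stmt6_general q g H f₀ σ β hβ0 s hs

end
end

section
/- Let η₂ ∈ (0,1), β ∈ (0,1), and let L_I > 0 be a block Lipschitz constant for I. Suppose s ∈ ℝ^{|I|} satisfies m(s) ≤ m(ŝ), so that in particular q(0) − q(s) ≥ (σ/6)‖s‖³ > 0 when s ≠ 0. If σ ≥ L_I/(1 − η₂), then the ratio ρ = (f(x) − f(x + U_I s))/(q(0) − q(s)) satisfies ρ ≥ η₂. -/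
open scoped RealInnerProductSpace

noncomputable section

lemma blockAdj {n : ℕ} (I : Finset (Fin n)) (w : EuclideanSpace ℝ (Fin n))
    (u : EuclideanSpace ℝ ↥I) :
    ⟪w, blockIncl I u⟫ = ⟪blockRestr I w, u⟫ := by
  classical
  simp only [blockIncl, blockRestr, LinearMap.coe_mk, AddHom.coe_mk, PiLp.inner_apply,
    RCLike.inner_apply, conj_trivial]
  conv_rhs => rw [Finset.univ_eq_attach]
  rw [← Finset.sum_subset (Finset.subset_univ I)
    (fun i _ hi => by simp [hi] : ∀ i ∈ Finset.univ, i ∉ I →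
      (if h : i ∈ I then u ⟨i, h⟩ else 0) * w i = 0)]
  rw [← Finset.sum_attach I (fun i => (if h : i ∈ I then u ⟨i, h⟩ else 0) * w i)]
  exact Finset.sum_congr rfl (fun i _ => by simp [i.2])

lemma blockHess_apply {n : ℕ} (I : Finset (Fin n))
    (H : EuclideanSpace ℝ (Fin n) →L[ℝ] EuclideanSpace ℝ (Fin n)) (u : EuclideanSpace ℝ ↥I) :
    blockHess I H u = blockRestr I (H (blockIncl I u)) := rfl

lemma taylor_bound {n : ℕ}
    (f : EuclideanSpace ℝ (Fin n) → ℝ)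
    (gradf : EuclideanSpace ℝ (Fin n) → EuclideanSpace ℝ (Fin n))
    (hessf : EuclideanSpace ℝ (Fin n) → (EuclideanSpace ℝ (Fin n) →L[ℝ] EuclideanSpace ℝ (Fin n)))
    (hgradf : ∀ x, HasGradientAt f (gradf x) x)
    (hhessf : ∀ x, HasFDerivAt gradf (hessf x) x)
    (x : EuclideanSpace ℝ (Fin n)) (I : Finset (Fin n))
    (LI : ℝ)
    (hlip : ∀ (y : EuclideanSpace ℝ (Fin n)) (u : EuclideanSpace ℝ ↥I),
      ‖blockHess I (hessf (y + blockIncl I u)) - blockHess I (hessf y)‖ ≤ LI * ‖u‖)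
    (s : EuclideanSpace ℝ ↥I) :
    f (x + blockIncl I s) ≤ f x + ⟪blockRestr I (gradf x), s⟫
      + (1/2) * ⟪s, blockHess I (hessf x) s⟫ + LI * ‖s‖ ^ 3 / 6 := by
  set v : EuclideanSpace ℝ (Fin n) := blockIncl I s with hv
  set K : ℝ := LI * ‖s‖ ^ 3 with hK
  set g : EuclideanSpace ℝ ↥I := blockRestr I (gradf x) with hgdef
  set H : EuclideanSpace ℝ ↥I →L[ℝ] EuclideanSpace ℝ ↥I := blockHess I (hessf x) with hHdef
  have hc : ∀ t : ℝ, HasDerivAt (fun t : ℝ => x + t • v) v t := fun t => by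
    simpa using ((hasDerivAt_id t).smul_const v).const_add x
  set F : ℝ → ℝ := fun t => f (x + t • v) - f x - t * ⟪g, s⟫
      - t ^ 2 / 2 * ⟪s, H s⟫ - K * t ^ 3 / 6 with hF
  set F1 : ℝ → ℝ := fun t => ⟪gradf (x + t • v), v⟫ - ⟪g, s⟫ - t * ⟪s, H s⟫ - K * t ^ 2 / 2
    with hF1def
  set F2 : ℝ → ℝ := fun t => ⟪hessf (x + t • v) v, v⟫ - ⟪s, H s⟫ - K * t with hF2def
  have h2 : ∀ t : ℝ, HasDerivAt (fun t : ℝ => t * ⟪g, s⟫) ⟪g, s⟫ t := fun t => by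
    simpa using (hasDerivAt_id t).mul_const ⟪g, s⟫
  have h3 : ∀ t : ℝ, HasDerivAt (fun t : ℝ => t ^ 2 / 2 * ⟪s, H s⟫) (t * ⟪s, H s⟫) t := by
    intro t
    have h : HasDerivAt (fun t : ℝ => t ^ 2 / 2) t t := by
      simpa using (hasDerivAt_pow 2 t).div_const 2
    simpa using h.mul_const ⟪s, H s⟫
  have h3' : ∀ t : ℝ, HasDerivAt (fun t : ℝ => t * ⟪s, H s⟫) ⟪s, H s⟫ t := fun t => by
    simpa using (hasDerivAt_id t).mul_const ⟪s, H s⟫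
  have h4 : ∀ t : ℝ, HasDerivAt (fun t : ℝ => K * t ^ 3 / 6) (K * t ^ 2 / 2) t := by
    intro t
    have h : HasDerivAt (fun t : ℝ => t ^ 3) (3 * t ^ 2) t := by
      simpa using (hasDerivAt_pow 3 t)
    exact ((h.const_mul K).div_const 6).congr_deriv (by ring)
  have h4' : ∀ t : ℝ, HasDerivAt (fun t : ℝ => K * t ^ 2 / 2) (K * t) t := by
    intro t
    have h : HasDerivAt (fun t : ℝ => t ^ 2) (2 * t) t := by
      simpa using (hasDerivAt_pow 2 t)
    exact ((h.const_mul K).div_const 2).congr_deriv (by ring)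
  have hdF : ∀ t : ℝ, HasDerivAt F (F1 t) t := by
    intro t
    have h1 : HasDerivAt (fun t : ℝ => f (x + t • v)) ⟪gradf (x + t • v), v⟫ t := by
      have := ((hgradf (x + t • v)).hasFDerivAt).comp_hasDerivAt t (hc t)
      simpa [InnerProductSpace.toDual_apply_apply, Function.comp_def] using this
    exact (((h1.sub_const (f x)).sub (h2 t)).sub (h3 t)).sub (h4 t)
  have hdF1 : ∀ t : ℝ, HasDerivAt F1 (F2 t) t := by
    intro t
    have hg' : HasDerivAt (fun t : ℝ => gradf (x + t • v)) (hessf (x + t • v) v) t :=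
      (hhessf (x + t • v)).comp_hasDerivAt t (hc t)
    have h1 : HasDerivAt (fun t : ℝ => ⟪gradf (x + t • v), v⟫) ⟪hessf (x + t • v) v, v⟫ t := by
      simpa using HasDerivAt.inner ℝ hg' (hasDerivAt_const t v)
    exact ((h1.sub_const ⟪g, s⟫).sub (h3' t)).sub (h4' t)
  have hinner : ∀ y : EuclideanSpace ℝ (Fin n),
      ⟪hessf y v, v⟫ = ⟪blockHess I (hessf y) s, s⟫ := by
    intro y
    rw [hv, blockAdj I (hessf y (blockIncl I s)) s, ← blockHess_apply]
  have hF2le : ∀ t ∈ Set.Icc (0:ℝ) 1, F2 t ≤ 0 := by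
    intro t ht
    have hlip' := hlip x (t • s)
    rw [map_smul] at hlip'
    have hts : ‖t • s‖ = t * ‖s‖ := by
      rw [norm_smul, Real.norm_eq_abs, abs_of_nonneg ht.1]
    rw [hts] at hlip'
    set A := blockHess I (hessf (x + t • v)) with hA
    have key : ⟪(A - H) s, s⟫ ≤ LI * (t * ‖s‖) * ‖s‖ * ‖s‖ := by
      calc ⟪(A - H) s, s⟫ ≤ ‖(A - H) s‖ * ‖s‖ := real_inner_le_norm _ _
        _ ≤ (‖A - H‖ * ‖s‖) * ‖s‖ := by
            gcongr; exact (A - H).le_opNorm s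
        _ ≤ (LI * (t * ‖s‖) * ‖s‖) * ‖s‖ := by
            have hs2 : (0:ℝ) ≤ ‖s‖ := norm_nonneg s
            gcongr
        _ = LI * (t * ‖s‖) * ‖s‖ * ‖s‖ := by ring
    have expand : F2 t = ⟪(A - H) s, s⟫ - K * t := by
      simp only [hF2def, hinner, ContinuousLinearMap.sub_apply, inner_sub_left, hA]
      rw [real_inner_comm s (H s)]
    rw [expand]
    have : LI * (t * ‖s‖) * ‖s‖ * ‖s‖ = K * t := by rw [hK]; ring
    linarith [key, this.symm.le]
  have hF1cont : ContinuousOn F1 (Set.Icc (0:ℝ) 1) :=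
    fun t _ => ((hdF1 t).differentiableAt.continuousAt).continuousWithinAt
  have hF1anti : AntitoneOn F1 (Set.Icc (0:ℝ) 1) := by
    apply antitoneOn_of_deriv_nonpos (convex_Icc 0 1) hF1cont
    · intro t ht
      exact (hdF1 t).differentiableAt.differentiableWithinAt
    · intro t ht
      rw [(hdF1 t).deriv]
      rw [interior_Icc] at ht
      exact hF2le t ⟨le_of_lt ht.1, le_of_lt ht.2⟩
  have hF1zero : F1 0 = 0 := by
    simp only [hF1def]
    have h0 : (0:ℝ) • v = 0 := zero_smul _ _
    rw [h0, add_zero, hv, blockAdj I (gradf x) s, ← hgdef]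
    ring
  have hF1le : ∀ t ∈ Set.Icc (0:ℝ) 1, F1 t ≤ 0 := by
    intro t ht
    have := hF1anti (Set.left_mem_Icc.2 zero_le_one) ht ht.1
    rw [hF1zero] at this
    exact this
  have hFcont : ContinuousOn F (Set.Icc (0:ℝ) 1) :=
    fun t _ => ((hdF t).differentiableAt.continuousAt).continuousWithinAt
  have hFanti : AntitoneOn F (Set.Icc (0:ℝ) 1) := by
    apply antitoneOn_of_deriv_nonpos (convex_Icc 0 1) hFcont
    · intro t ht
      exact (hdF t).differentiableAt.differentiableWithinAt
    · intro t ht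
      rw [(hdF t).deriv]
      rw [interior_Icc] at ht
      exact hF1le t ⟨le_of_lt ht.1, le_of_lt ht.2⟩
  have hF0 : F 0 = 0 := by simp [hF]
  have hF1' : F 1 ≤ 0 := by
    have := hFanti (Set.left_mem_Icc.2 zero_le_one) (Set.right_mem_Icc.2 zero_le_one) zero_le_one
    rw [hF0] at this
    exact this
  have hfin : f (x + (1:ℝ) • v) - f x - 1 * ⟪g, s⟫ - 1 ^ 2 / 2 * ⟪s, H s⟫ - K * 1 ^ 3 / 6 ≤ 0 :=
    hF1'
  rw [one_smul] at hfin
  rw [hK] at hfin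
  linarith

lemma cauchy_le {E : Type*} [NormedAddCommGroup E] [InnerProductSpace ℝ E]
    (f₀ : ℝ) (g : E) (H : E →L[ℝ] E) (σ β : ℝ)
    (hσ : 0 < σ) (hβ0 : 0 < β) (hβ1 : β < 1) (hg : g ≠ 0) :
    cubicModel f₀ g H σ (sHat β σ g H) ≤ f₀ := by
  classical
  set α := alphaHat β σ g H with hα
  have hgn : (0:ℝ) < ‖g‖ := norm_pos_iff.2 hg
  have hr0 : (0:ℝ) ≤ 3 * β / (σ * ‖g‖) := by positivity
  have hαr : α ≤ Real.sqrt (3 * β / (σ * ‖g‖)) := by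
    rw [hα, alphaHat]
    split
    · exact le_refl _
    · exact min_le_right _ _
  have hα0 : 0 ≤ α := by
    rw [hα, alphaHat]
    split
    · exact Real.sqrt_nonneg _
    · next h =>
      exact le_min (by positivity) (Real.sqrt_nonneg _)
  have hαH : α * ‖H‖ ≤ β := by
    rw [hα, alphaHat]
    split
    · next h => simp [h, hβ0.le]
    · next h =>
      have hH : (0:ℝ) < ‖H‖ := norm_pos_iff.2 h
      calc min (β / ‖H‖) (Real.sqrt (3 * β / (σ * ‖g‖))) * ‖H‖
          ≤ (β / ‖H‖) * ‖H‖ := by gcongr; exact min_le_left _ _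
        _ = β := by field_simp
  have hα2 : σ * α ^ 2 * ‖g‖ ≤ 3 * β := by
    have h2 : α ^ 2 ≤ 3 * β / (σ * ‖g‖) := by
      have := Real.sq_sqrt hr0
      nlinarith [hαr, Real.sqrt_nonneg (3 * β / (σ * ‖g‖))]
    calc σ * α ^ 2 * ‖g‖ ≤ σ * (3 * β / (σ * ‖g‖)) * ‖g‖ := by gcongr
      _ = 3 * β := by field_simp
  have hnorm : ‖sHat β σ g H‖ = α * ‖g‖ := by
    rw [sHat, norm_smul, Real.norm_eq_abs, abs_neg, abs_of_nonneg hα0]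
  have hinner1 : ⟪g, sHat β σ g H⟫ = -α * ‖g‖ ^ 2 := by
    rw [sHat, inner_smul_right, real_inner_self_eq_norm_sq]
  have hinner2 : ⟪sHat β σ g H, H (sHat β σ g H)⟫ = α ^ 2 * ⟪g, H g⟫ := by
    rw [sHat, map_smul, inner_smul_right, inner_smul_left]
    simp
    rw [← hα]; ring
  have hgHg : ⟪g, H g⟫ ≤ ‖H‖ * ‖g‖ ^ 2 := by
    calc ⟪g, H g⟫ ≤ ‖g‖ * ‖H g‖ := real_inner_le_norm _ _
      _ ≤ ‖g‖ * (‖H‖ * ‖g‖) := by gcongr; exact H.le_opNorm g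
      _ = ‖H‖ * ‖g‖ ^ 2 := by ring
  rw [cubicModel, quadModel, hinner1, hinner2, hnorm]
  have e1 : α ^ 2 / 2 * ⟪g, H g⟫ ≤ α * β / 2 * ‖g‖ ^ 2 := by
    have t1 : α ^ 2 / 2 * ⟪g, H g⟫ ≤ α ^ 2 / 2 * (‖H‖ * ‖g‖ ^ 2) :=
      mul_le_mul_of_nonneg_left hgHg (by positivity)
    have t2 : α * (α * ‖H‖) ≤ α * β := mul_le_mul_of_nonneg_left hαH hα0
    have t3 : α * (α * ‖H‖) * ‖g‖ ^ 2 ≤ α * β * ‖g‖ ^ 2 :=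
      mul_le_mul_of_nonneg_right t2 (sq_nonneg _)
    nlinarith [t1, t3]
  have e2 : σ / 6 * (α * ‖g‖) ^ 3 ≤ α * β / 2 * ‖g‖ ^ 2 := by
    have t4 : σ * α ^ 2 * ‖g‖ * (α * ‖g‖ ^ 2 / 6) ≤ 3 * β * (α * ‖g‖ ^ 2 / 6) :=
      mul_le_mul_of_nonneg_right hα2 (by positivity)
    nlinarith [t4]
  have t5 : α * β * ‖g‖ ^ 2 ≤ α * ‖g‖ ^ 2 := by
    have : α * β ≤ α := mul_le_of_le_one_right hα0 hβ1.le
    exact mul_le_mul_of_nonneg_right this (sq_nonneg _)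
  nlinarith [e1, e2, t5]

theorem stmt9 (n : ℕ) (hn : 0 < n)
    (f : EuclideanSpace ℝ (Fin n) → ℝ)
    (gradf : EuclideanSpace ℝ (Fin n) → EuclideanSpace ℝ (Fin n))
    (hessf : EuclideanSpace ℝ (Fin n) → (EuclideanSpace ℝ (Fin n) →L[ℝ] EuclideanSpace ℝ (Fin n)))
    (hf : ContDiff ℝ 2 f)
    (hgradf : ∀ x, HasGradientAt f (gradf x) x)
    (hhessf : ∀ x, HasFDerivAt gradf (hessf x) x)
    (x : EuclideanSpace ℝ (Fin n)) (I : Finset (Fin n))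
    (hg : blockRestr I (gradf x) ≠ 0)
    (σ β η₂ : ℝ) (hσ : 0 < σ) (hβ0 : 0 < β) (hβ1 : β < 1) (hη₂0 : 0 < η₂) (hη₂1 : η₂ < 1)
    (LI : ℝ) (hLI : 0 < LI)
    (hlip : ∀ (y : EuclideanSpace ℝ (Fin n)) (u : EuclideanSpace ℝ ↥I),
      ‖blockHess I (hessf (y + blockIncl I u)) - blockHess I (hessf y)‖ ≤ LI * ‖u‖)
    (s : EuclideanSpace ℝ ↥I) (hs0 : s ≠ 0)
    (hs : cubicModel (f x) (blockRestr I (gradf x)) (blockHess I (hessf x)) σ s ≤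
      cubicModel (f x) (blockRestr I (gradf x)) (blockHess I (hessf x)) σ
        (sHat β σ (blockRestr I (gradf x)) (blockHess I (hessf x))))
    (hσL : LI / (1 - η₂) ≤ σ) :
    η₂ ≤ (f x - f (x + blockIncl I s)) /
      (quadModel (f x) (blockRestr I (gradf x)) (blockHess I (hessf x)) 0 -
       quadModel (f x) (blockRestr I (gradf x)) (blockHess I (hessf x)) s) := by
  classical
  set f₀ : ℝ := f x with hf₀
  set g : EuclideanSpace ℝ ↥I := blockRestr I (gradf x) with hgdef
  set H : EuclideanSpace ℝ ↥I →L[ℝ] EuclideanSpace ℝ ↥I := blockHess I (hessf x) with hHdef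
  have hq0 : quadModel f₀ g H 0 = f₀ := by simp [quadModel]
  have hmf : cubicModel f₀ g H σ s ≤ f₀ :=
    hs.trans (cauchy_le f₀ g H σ β hσ hβ0 hβ1 hg)
  have hsn : (0:ℝ) < ‖s‖ := norm_pos_iff.2 hs0
  have hs3 : (0:ℝ) < ‖s‖ ^ 3 := by positivity
  have hD : σ / 6 * ‖s‖ ^ 3 ≤ f₀ - quadModel f₀ g H s := by
    rw [cubicModel] at hmf; linarith
  have hDpos : 0 < f₀ - quadModel f₀ g H s :=
    lt_of_lt_of_le (by positivity) hD
  have htay := taylor_bound f gradf hessf hgradf hhessf x I LI hlip s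
  have htay' : f (x + blockIncl I s) ≤ quadModel f₀ g H s + LI * ‖s‖ ^ 3 / 6 := by
    rw [quadModel]; linarith [htay]
  have hη : (0:ℝ) < 1 - η₂ := by linarith
  have hLσ : LI ≤ σ * (1 - η₂) := by
    have := (div_le_iff₀ hη).1 hσL
    linarith
  rw [hq0, le_div_iff₀ hDpos]
  have key1 : LI * ‖s‖ ^ 3 ≤ σ * (1 - η₂) * ‖s‖ ^ 3 :=
    mul_le_mul_of_nonneg_right hLσ hs3.le
  have key2 : (1 - η₂) * (σ / 6 * ‖s‖ ^ 3) ≤ (1 - η₂) * (f₀ - quadModel f₀ g H s) :=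
    mul_le_mul_of_nonneg_left hD hη.le
  nlinarith [htay', key1, key2]


end
end
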